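/- For N = 3 and r = 4, write K = K(θ), and for each fourth root of unity ω ∈ {1, i, −1, −i} define F_ω = |1232⟩ + ω|2123⟩ + ω²|3212⟩ + ω³|2321⟩ in the invariant subspace S₈. Then F_ω is directly an eigenvector of the transfer matrix: T^{(4)}(θ)F_ω = (ω³K⁴ + ω)·F_ω. -/

import Mathlib

/-!
In the auxiliary space, `t^{(1)}` with site indices `a → b` is the matrix
`E_{ba} + K q^{ρ_b − ρ_{b'}} E_{a'b'}`, and `⟨x|T^{(r)}|y⟩` is the trace of the ordered product
of these matrices over the sites. If no two cyclically adjacent entries of `y` are conjugate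
(`y_{m+1} ≠ y_m'`), every word containing a factor `E_{a'b'}` followed by a factor `E_{ba}`
vanishes, and the remaining mixed words `E⋯E E'⋯E'` vanish under the trace by cyclicity. Only
the two pure words survive: `T|y⟩` is the shift of `|y⟩` in one direction plus `K^r` times a
`q`-weight times its shift in the other direction. On `S₈` the weight is `1`, and the four
states of `F_ω` are cyclic shifts of one another without conjugate neighbours, so `T` acts on
their discrete Fourier combination by `ω + ω³K⁴`.
-/

open Matrix BigOperators

noncomputable section

/-- The `ρ`-values: `(ρ₁,…,ρ_N) = (n−1/2,…,1/2,0,−1/2,…,−n+1/2)` for `N = 2n+1`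
and `(n−1,…,1,0,0,−1,…,−n+1)` for `N = 2n` (here `i : Fin N` is the 0-based index). -/
def rho (N : ℕ) (i : Fin N) : ℝ :=
  let d : ℝ := ((N : ℝ) - 1) / 2 - (i : ℝ)
  if 0 < d then d - 1 / 2 else if d < 0 then d + 1 / 2 else 0

/-- `P₀' = Σ_{i,j} q^{ρ_{j'}−ρ_j} (ij)⊗(i'j')`, where `i' = N−i+1` (0-based: `Fin.rev`). -/
def P0' (N : ℕ) (q : ℝ) : Matrix (Fin N × Fin N) (Fin N × Fin N) ℂ :=
  Matrix.of fun p s =>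
    if p.2 = p.1.rev ∧ s.2 = s.1.rev then ((q ^ (rho N s.1.rev - rho N s.1) : ℝ) : ℂ) else 0

/-- The permutation matrix `P = Σ_{i,j} (ij)⊗(ji)`. -/
def Pmat (N : ℕ) : Matrix (Fin N × Fin N) (Fin N × Fin N) ℂ :=
  Matrix.of fun p s => if s = (p.2, p.1) then 1 else 0

/-- `K(θ) = −sinh θ / sinh(η+θ)`. -/
def Kf (η θ : ℝ) : ℝ := -Real.sinh θ / Real.sinh (η + θ)

/-- The braid matrix `R̂(θ) = I + K(θ)·P₀'`. -/
def Rhat (N : ℕ) (q η θ : ℝ) : Matrix (Fin N × Fin N) (Fin N × Fin N) ℂ :=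
  1 + (Kf η θ : ℂ) • P0' N q

/-- `t^{(1)}(θ) = P·R̂(θ)`; the block `t^{(1)}_{ij}(θ)` has entries `t^{(1)}(θ) (i,a) (j,b)`. -/
def tmat (N : ℕ) (q η θ : ℝ) : Matrix (Fin N × Fin N) (Fin N × Fin N) ℂ :=
  Pmat N * Rhat N q η θ

/-- The monodromy blocks: `mono N q η θ r (i,a) (j,b) = t^{(r)}_{ij}(θ) (a,b)` where
`t^{(r)}_{ij} = Σ_k t^{(1)}_{ik} ⊗ t^{(r−1)}_{kj}`. -/
def mono (N : ℕ) (q η θ : ℝ) :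
    (r : ℕ) → Matrix (Fin N × (Fin r → Fin N)) (Fin N × (Fin r → Fin N)) ℂ
  | 0 => Matrix.of fun p s => if p.1 = s.1 then 1 else 0
  | r + 1 => Matrix.of fun p s =>
      ∑ k : Fin N, tmat N q η θ (p.1, p.2 0) (k, s.2 0) *
        mono N q η θ r (k, Fin.tail p.2) (s.1, Fin.tail s.2)

/-- The order-`r` transfer matrix `T^{(r)}(θ) = Σ_i t^{(r)}_{ii}(θ)` acting on `(ℂ^N)^{⊗r}`. -/
def Transfer (N : ℕ) (q η θ : ℝ) (r : ℕ) : Matrix (Fin r → Fin N) (Fin r → Fin N) ℂ :=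
  Matrix.of fun a b => ∑ i : Fin N, mono N q η θ r (i, a) (i, b)

/-- The order-2 transfer matrix `T^{(2)}(θ) = Σ_{i,k} t^{(1)}_{ik}(θ) ⊗ t^{(1)}_{ki}(θ)`
acting on `ℂ^N ⊗ ℂ^N` with basis `|ab⟩`. -/
def Transfer2 (N : ℕ) (q η θ : ℝ) : Matrix (Fin N × Fin N) (Fin N × Fin N) ℂ :=
  Matrix.of fun p s =>
    ∑ i : Fin N, ∑ k : Fin N, tmat N q η θ (i, p.1) (k, s.1) * tmat N q η θ (k, p.2) (i, s.2)

/-- The quantum integer `[m]_q`. -/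
def qint (q : ℝ) (m : ℕ) : ℝ :=
  if q = 1 then (m : ℝ) else (q ^ m - q⁻¹ ^ m) / (q - q⁻¹)

/-- Standard basis vector. -/
def bv {ι : Type*} [DecidableEq ι] (a : ι) : ι → ℂ := fun c => if c = a then 1 else 0

/-- `F_ω = |1232⟩ + ω|2123⟩ + ω²|3212⟩ + ω³|2321⟩`. -/
def Fvec (ω : ℂ) : (Fin 4 → Fin 3) → ℂ :=
  bv (![0, 1, 2, 1] : Fin 4 → Fin 3) + ω • bv (![1, 0, 1, 2] : Fin 4 → Fin 3) +
    ω ^ 2 • bv (![2, 1, 0, 1] : Fin 4 → Fin 3) + ω ^ 3 • bv (![1, 2, 1, 0] : Fin 4 → Fin 3)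


section ProductExpansion

variable {R : Type*} [Semiring R]

theorem mul_prod_ofFn_add_of_mul_eq_zero {r : ℕ} (P K : Fin r → R)
    (hPK : ∀ i j : Fin r, (j : ℕ) = i + 1 → K i * P j = 0)
    (X : R) (hX : ∀ j : Fin r, (j : ℕ) = 0 → X * P j = 0) :
    X * (List.ofFn fun i => P i + K i).prod = X * (List.ofFn K).prod := by
  induction r generalizing X with
  | zero => simp
  | succ r ih =>
    have hXK : ∀ j : Fin r, (j : ℕ) = 0 → X * K 0 * P j.succ = 0 := fun j hj => by
      rw [mul_assoc, hPK 0 j.succ (by simp [hj]), mul_zero]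
    calc X * (List.ofFn fun i => P i + K i).prod
        = X * K 0 * (List.ofFn fun i : Fin r => P i.succ + K i.succ).prod := by
          rw [List.ofFn_succ, List.prod_cons, ← mul_assoc, mul_add, hX 0 rfl, zero_add]
      _ = X * K 0 * (List.ofFn fun i : Fin r => K i.succ).prod :=
          ih _ _ (fun i j h => hPK _ _ (by simp [h])) _ hXK
      _ = X * (List.ofFn K).prod := by simp only [List.ofFn_succ, List.prod_cons, mul_assoc]

theorem prod_ofFn_add_mul_of_mul_eq_zero {r : ℕ} (P K : Fin r → R)
    (hPK : ∀ i j : Fin r, (j : ℕ) = i + 1 → K i * P j = 0)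
    (Y : R) (hY : ∀ i : Fin r, (i : ℕ) + 1 = r → K i * Y = 0) :
    (List.ofFn fun i => P i + K i).prod * Y = (List.ofFn P).prod * Y := by
  induction r generalizing Y with
  | zero => simp
  | succ r ih =>
    have hKP : ∀ i : Fin r, (i : ℕ) + 1 = r → K i.castSucc * (P (Fin.last r) * Y) = 0 :=
      fun i hi => by rw [← mul_assoc, hPK _ _ (by simp [hi]), zero_mul]
    calc (List.ofFn fun i => P i + K i).prod * Y
        = (List.ofFn fun i : Fin r => P i.castSucc + K i.castSucc).prod *
            (P (Fin.last r) * Y) := by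
          rw [List.ofFn_succ', List.prod_concat, mul_assoc, add_mul, hY (Fin.last r) rfl,
            add_zero]
      _ = (List.ofFn fun i : Fin r => P i.castSucc).prod * (P (Fin.last r) * Y) :=
          ih _ _ (fun i j h => hPK _ _ (by simp [h])) _ hKP
      _ = (List.ofFn P).prod * Y := by rw [List.ofFn_succ' P, List.prod_concat, mul_assoc]

end ProductExpansion

namespace Matrix

variable {n α : Type*} [Fintype n] [DecidableEq n]

theorem trace_prod_ofFn_add_of_mul_eq_zero [CommSemiring α] {r : ℕ}
    (P K : Fin (r + 1) → Matrix n n α) (hPK : ∀ i, K i * P (i + 1) = 0) :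
    trace (List.ofFn fun i => P i + K i).prod =
      trace (List.ofFn P).prod + trace (List.ofFn K).prod := by
  have hsucc (i : Fin r) : K i.castSucc * P i.succ = 0 := by
    rw [← Fin.coeSucc_eq_succ]
    exact hPK _
  have hchain (i j : Fin r) (h : (j : ℕ) = i + 1) : K i.castSucc * P j.castSucc = 0 := by
    rw [show j.castSucc = i.succ from Fin.ext (by simp [h])]
    exact hsucc i
  have hP := prod_ofFn_add_mul_of_mul_eq_zero _ _ hchain (P (Fin.last r))
    fun i hi => by rw [show Fin.last r = i.succ from Fin.ext (by simp [hi])]; exact hsucc i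
  have hK := mul_prod_ofFn_add_of_mul_eq_zero _ _ hchain (K (Fin.last r))
    fun j hj => by rw [show j.castSucc = Fin.last r + 1 from Fin.ext (by simp [hj])]; exact hPK _
  rw [List.ofFn_succ' (fun i => P i + K i), List.prod_concat, mul_add, trace_add, hP,
    trace_mul_comm _ (K (Fin.last r)), hK, trace_mul_comm (K (Fin.last r)),
    List.ofFn_succ' P, List.ofFn_succ' K, List.prod_concat, List.prod_concat]

theorem prod_ofFn_single [Semiring α] {r : ℕ} (u v : Fin (r + 1) → n) (c : Fin (r + 1) → α) :
    (List.ofFn fun i => single (u i) (v i) (c i)).prod =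
      if ∀ i : Fin r, v i.castSucc = u i.succ then
        single (u 0) (v (Fin.last r)) (List.ofFn c).prod
      else 0 := by
  induction r with
  | zero => simp
  | succ r ih =>
    rw [List.ofFn_succ, List.prod_cons, ih (fun i => u i.succ) (fun i => v i.succ)]
    by_cases h : v 0 = u 1 <;> simp [Fin.forall_fin_succ, h, List.ofFn_succ]

theorem trace_prod_ofFn_single [CommSemiring α] {r : ℕ} (u v : Fin (r + 1) → n)
    (c : Fin (r + 1) → α) :
    trace (List.ofFn fun i => single (u i) (v i) (c i)).prod =
      if ∀ i, v i = u (i + 1) then (List.ofFn c).prod else 0 := by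
  simp only [prod_ofFn_single, Fin.forall_fin_succ' (P := fun i => v i = u (i + 1)),
    Fin.coeSucc_eq_succ, Fin.last_add_one]
  by_cases hchain : ∀ i : Fin r, v i.castSucc = u i.succ
  · by_cases hclose : v (Fin.last r) = u 0
    · simp [hchain, hclose, trace_single_eq_same]
    · simp [hchain, hclose, trace_single_eq_of_ne (h := Ne.symm hclose)]
  · simp [hchain]

end Matrix

theorem bv_eq_pi_single {ι : Type*} [DecidableEq ι] (a : ι) : bv a = Pi.single a 1 := by
  funext c
  simp [bv, Pi.single_apply]

theorem rho_rev (N : ℕ) (i : Fin N) : rho N i.rev = -rho N i := by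
  have hrev : ((i.rev : ℕ) : ℝ) = N - 1 - i := by
    rw [Fin.val_rev, Nat.cast_sub (by omega)]
    push_cast
    ring
  simp only [rho, hrev]
  split_ifs <;> linarith

theorem rho_three (i : Fin 3) : rho 3 i = (1 - i) / 2 := by
  fin_cases i <;> norm_num [rho]

-- With 0-based entries, `S₈` is the sector `∑ m, y m = 4`.
theorem sum_rho_three_eq_zero {r : ℕ} (y : Fin r → Fin 3) (hy : ∑ m, (y m : ℕ) = r) :
    ∑ m, rho 3 (y m) = 0 := by
  have hy' : ∑ m, ((y m : ℕ) : ℝ) = r := by exact_mod_cast hy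
  simp only [rho_three, ← Finset.sum_div, Finset.sum_sub_distrib, hy']
  simp

section TransferMatrix

variable (N : ℕ) (q η θ : ℝ)

def auxMatrix (a b : Fin N) : Matrix (Fin N) (Fin N) ℂ :=
  Matrix.of fun i j => tmat N q η θ (i, a) (j, b)

theorem tmat_apply (i a : Fin N) (s : Fin N × Fin N) :
    tmat N q η θ (i, a) s = Rhat N q η θ (a, i) s := by
  simp [tmat, Pmat, mul_apply]

theorem auxMatrix_eq (a b : Fin N) :
    auxMatrix N q η θ a b = single b a 1 +
      single a.rev b.rev ((Kf η θ : ℂ) * ((q ^ (rho N b - rho N b.rev) : ℝ) : ℂ)) := by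
  ext i j
  rw [auxMatrix, of_apply, tmat_apply, Rhat, Matrix.add_apply, Matrix.add_apply, one_apply,
    Matrix.smul_apply, P0', of_apply, single_apply, single_apply, smul_eq_mul]
  congr 1
  · simp only [Prod.mk.injEq, eq_comm, and_comm]
  · rw [mul_ite, mul_zero]
    by_cases h : i = a.rev ∧ b = j.rev
    · obtain ⟨rfl, rfl⟩ := h
      simp
    · rw [if_neg h, if_neg]
      rintro ⟨rfl, rfl⟩
      simp at h

theorem mono_apply (r : ℕ) (i j : Fin N) (a b : Fin r → Fin N) :
    mono N q η θ r (i, a) (j, b) =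
      (List.ofFn fun m => auxMatrix N q η θ (a m) (b m)).prod i j := by
  induction r generalizing i with
  | zero => simp [mono, one_apply]
  | succ r ih =>
    simp only [mono, of_apply, ih, List.ofFn_succ, List.prod_cons, mul_apply]
    rfl

theorem transfer_apply (r : ℕ) (a b : Fin r → Fin N) :
    Transfer N q η θ r a b =
      trace (List.ofFn fun m => auxMatrix N q η θ (a m) (b m)).prod := by
  simp [Transfer, mono_apply, trace]

def twist {r : ℕ} (y : Fin r → Fin N) : ℝ :=
  ∏ m, q ^ (rho N (y m) - rho N (y m).rev)

theorem transfer_apply_of_forall_ne_rev {r : ℕ} (x y : Fin (r + 1) → Fin N)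
    (hy : ∀ m, y (m + 1) ≠ (y m).rev) :
    Transfer N q η θ (r + 1) x y =
      (if ∀ m, x m = y (m + 1) then 1 else 0) +
        if ∀ m, y m = x (m + 1) then (Kf η θ : ℂ) ^ (r + 1) * twist N q y else 0 := by
  rw [transfer_apply]
  simp only [auxMatrix_eq]
  rw [trace_prod_ofFn_add_of_mul_eq_zero (fun m => single (y m) (x m) 1)
    (fun m => single (x m).rev (y m).rev _)
    fun m => single_mul_single_of_ne _ _ _ _ (hy m).symm _, trace_prod_ofFn_single,
    trace_prod_ofFn_single]
  simp only [Fin.rev_inj, List.prod_ofFn, Finset.prod_const_one, Finset.prod_mul_distrib,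
    Finset.prod_const, Finset.card_univ, Fintype.card_fin, twist, Complex.ofReal_prod]

theorem transfer_mulVec_bv_of_forall_ne_rev {r : ℕ} (y : Fin (r + 1) → Fin N)
    (hy : ∀ m, y (m + 1) ≠ (y m).rev) :
    (Transfer N q η θ (r + 1)).mulVec (bv y) =
      bv (fun m => y (m + 1)) +
        ((Kf η θ : ℂ) ^ (r + 1) * twist N q y) • bv (fun m => y (m - 1)) := by
  funext x
  have hshift : (∀ m, y m = x (m + 1)) ↔ x = fun m => y (m - 1) := by
    refine ⟨fun h => funext fun m => by rw [h, sub_add_cancel], ?_⟩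
    rintro rfl m
    simp
  rw [bv_eq_pi_single, mulVec_single_one, col_apply,
    transfer_apply_of_forall_ne_rev _ _ _ _ _ _ hy]
  simp only [hshift]
  simp [bv, ← funext_iff]

theorem twist_eq_one {r : ℕ} (hq : 0 < q) (y : Fin r → Fin N) (hy : ∑ m, rho N (y m) = 0) :
    twist N q y = 1 := by
  rw [twist, ← Real.rpow_sum_of_pos hq]
  simp [rho_rev, Finset.sum_add_distrib, hy]

end TransferMatrix

theorem transfer4_S8_F_eigenstate_general (q : ℝ) (hq : 0 < q) (η : ℝ)
    (θ : ℝ) (ω : ℂ) (hω : ω ^ 4 = 1) :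
    (Transfer 3 q η θ 4).mulVec (Fvec ω) =
      (ω ^ 3 * (Kf η θ : ℂ) ^ 4 + ω) • Fvec ω := by
  have hcol (y yl yr : Fin 4 → Fin 3) (hy : ∀ m, y (m + 1) ≠ (y m).rev)
      (hS₈ : ∑ m, (y m : ℕ) = 4) (hl : (fun m => y (m + 1)) = yl)
      (hr : (fun m => y (m - 1)) = yr) :
      (Transfer 3 q η θ 4).mulVec (bv y) = bv yl + ((Kf η θ : ℂ) ^ 4) • bv yr := by
    rw [transfer_mulVec_bv_of_forall_ne_rev _ _ _ _ _ hy,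
      twist_eq_one _ _ hq _ (sum_rho_three_eq_zero _ hS₈), hl, hr, Complex.ofReal_one, mul_one]
  simp only [Fvec, mulVec_add, mulVec_smul]
  rw [hcol ![0, 1, 2, 1] ![1, 2, 1, 0] ![1, 0, 1, 2],
    hcol ![1, 0, 1, 2] ![0, 1, 2, 1] ![2, 1, 0, 1],
    hcol ![2, 1, 0, 1] ![1, 0, 1, 2] ![1, 2, 1, 0],
    hcol ![1, 2, 1, 0] ![2, 1, 0, 1] ![0, 1, 2, 1]]
  · funext x
    simp only [Pi.add_apply, Pi.smul_apply, smul_eq_mul]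
    linear_combination -((Kf η θ : ℂ) ^ 4 * bv ![1, 0, 1, 2] x +
      ω * (Kf η θ : ℂ) ^ 4 * bv ![2, 1, 0, 1] x +
      (ω ^ 2 * (Kf η θ : ℂ) ^ 4 + 1) * bv ![1, 2, 1, 0] x) * hω
  all_goals decide

/-- For `N = 3`, `r = 4` and each fourth root of unity `ω`, the state `F_ω ∈ S₈` is
directly an eigenvector of `T^{(4)}(θ)` with eigenvalue `ω³K⁴ + ω`. -/
theorem transfer4_S8_F_eigenstate (q : ℝ) (hq : 0 < q) (η : ℝ) (hηpos : 0 < η)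
    (hη : Real.exp η + Real.exp (-η) = q + q⁻¹ + 1)
    (θ : ℝ) (hθ : Real.sinh (η + θ) ≠ 0) (ω : ℂ) (hω : ω ^ 4 = 1) :
    (Transfer 3 q η θ 4).mulVec (Fvec ω) =
      (ω ^ 3 * (Kf η θ : ℂ) ^ 4 + ω) • Fvec ω :=
  transfer4_S8_F_eigenstate_general q hq η θ ω hω

end
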